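/- Let T be an HC tree of order n that is locally optimal with respect to the interchange operation, for a similarity function w : {1,…,n}×{1,…,n} → ℝ≥0. Then rev(T) ≥ ((n−2)/3) · Σ_{i<j} w(i,j). -/
import Mathlib


/-- A (rooted, full) binary tree with leaves labeled by elements of `α`. -/
inductive HCTree (α : Type) : Type
  | leaf : α → HCTree α
  | node : HCTree α → HCTree α → HCTree α
  deriving DecidableEq

namespace HCTree

variable {α : Type} [DecidableEq α]

/-- The set of leaf labels of a tree. -/
def leaves : HCTree α → Finset α
  | leaf a => {a}
  | node l r => leaves l ∪ leaves r

/-- The tree is a valid HC tree: all leaf labels are pairwise distinct. -/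
def Proper : HCTree α → Prop
  | leaf _ => True
  | node l r => Proper l ∧ Proper r ∧ Disjoint (leaves l) (leaves r)

/-- The number of leaves of the subtree rooted at the lowest common ancestor
of the leaves `i` and `j` (i.e. `|T_{i,j}|`). -/
def lcaSize : HCTree α → α → α → ℕ
  | leaf _, _, _ => 1
  | node l r, i, j =>
      if i ∈ leaves l ∧ j ∈ leaves l then lcaSize l i j
      else if i ∈ leaves r ∧ j ∈ leaves r then lcaSize r i j
      else (leaves l ∪ leaves r).card

/-- `Σ_{i<j, i,j ∈ L} w i j`. -/
noncomputable def pairsSum [LinearOrder α] (w : α → α → ℝ) (L : Finset α) : ℝ :=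
  ∑ i ∈ L, ∑ j ∈ L, if i < j then w i j else 0

/-- Moseley–Wang revenue of `T` with respect to its own leaf set:
`rev(T) = Σ_{i<j} w(i,j) (|L| - |T_{i,j}|)`. -/
noncomputable def rev [LinearOrder α] (w : α → α → ℝ) (T : HCTree α) : ℝ :=
  ∑ i ∈ T.leaves, ∑ j ∈ T.leaves,
    if i < j then w i j * ((T.leaves.card : ℝ) - (T.lcaSize i j : ℝ)) else 0

/-- Dasgupta cost: `cost(T) = Σ_{i<j} w(i,j) |T_{i,j}|`. -/
noncomputable def cost [LinearOrder α] (w : α → α → ℝ) (T : HCTree α) : ℝ :=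
  ∑ i ∈ T.leaves, ∑ j ∈ T.leaves,
    if i < j then w i j * (T.lcaSize i j : ℝ) else 0

/-- `w(A,B) = Σ_{i∈A, j∈B} w(i,j)`. -/
noncomputable def wSet (w : α → α → ℝ) (A B : Finset α) : ℝ := ∑ i ∈ A, ∑ j ∈ B, w i j

/-- One-hole contexts for `HCTree`. -/
inductive Ctx (α : Type) : Type
  | hole : Ctx α
  | nodeL : Ctx α → HCTree α → Ctx α
  | nodeR : HCTree α → Ctx α → Ctx α

/-- Filling the hole of a context with a tree. -/
def Ctx.fill {α : Type} : Ctx α → HCTree α → HCTree α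
  | Ctx.hole, T => T
  | Ctx.nodeL K r, T => node (Ctx.fill K T) r
  | Ctx.nodeR l K, T => node l (Ctx.fill K T)

/-- Equality of HC trees as *unordered* trees (children of a node are unordered). -/
inductive TEq : HCTree α → HCTree α → Prop
  | leaf (a : α) : TEq (leaf a) (leaf a)
  | node {l r l' r' : HCTree α} : TEq l l' → TEq r r' → TEq (node l r) (node l' r')
  | swap {l r l' r' : HCTree α} : TEq l r' → TEq r l' → TEq (node l r) (node l' r')

/-- `T'` is obtained from `T` by a single interchange operation: at an edge `(x,y)`
where `x` is internal with parent `y`, the subtrees rooted at the children of `x`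
have leaf sets `A` and `B`, and the other child of `y` has leaf set `C`; the
operation swaps the `B`-subtree with the `C`-subtree, or the `A`-subtree with
the `C`-subtree. -/
def Interchange {α : Type} (T T' : HCTree α) : Prop :=
  ∃ (K : Ctx α) (A B C : HCTree α),
    T = K.fill (node (node A B) C) ∧
    (T' = K.fill (node (node A C) B) ∨ T' = K.fill (node (node C B) A))

/-- `T` is locally optimal: no interchange, performed on any presentation `S` of
`T` as an unordered tree, strictly increases the revenue. -/
def LocalOpt [LinearOrder α] (w : α → α → ℝ) (T : HCTree α) : Prop :=
  ∀ S S' : HCTree α, TEq T S → Interchange S S' → rev w S' ≤ rev w T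

/-- One step of local search: an interchange, up to unordered-tree equality. -/
def IStep (T T' : HCTree α) : Prop :=
  ∃ S S' : HCTree α, TEq T S ∧ Interchange S S' ∧ TEq S' T'

/-- The interchange distance: minimum number of interchange operations needed to
convert `T₁` into `T₂` (as unordered trees). -/
noncomputable def idist (T₁ T₂ : HCTree α) : ℕ :=
  sInf {k : ℕ | ∃ f : ℕ → HCTree α, f 0 = T₁ ∧ TEq (f k) T₂ ∧
    ∀ i < k, IStep (f i) (f (i + 1))}

/-- The total cost of all merges of `T`: the sum over internal nodes, with
children leaf sets `A`, `B`, of `(|A|+|B|)·w(A,B)`. -/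
noncomputable def mergeCostSum (w : α → α → ℝ) : HCTree α → ℝ
  | leaf _ => 0
  | node l r => mergeCostSum w l + mergeCostSum w r
      + ((l.leaves.card : ℝ) + (r.leaves.card : ℝ)) * wSet w l.leaves r.leaves

/-- The total revenue of all merges of `T` in a tree of order `n`: the sum over
internal nodes, with children leaf sets `A`, `B`, of `(n-|A|-|B|)·w(A,B)`. -/
noncomputable def mergeRevSum (w : α → α → ℝ) (n : ℕ) : HCTree α → ℝ
  | leaf _ => 0
  | node l r => mergeRevSum w n l + mergeRevSum w n r
      + ((n : ℝ) - (l.leaves.card : ℝ) - (r.leaves.card : ℝ)) * wSet w l.leaves r.leaves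

/-- Average similarity between two clusters. -/
noncomputable def sim (w : α → α → ℝ) (A B : Finset α) : ℝ :=
  wSet w A B / ((A.card : ℝ) * (B.card : ℝ))

/-- The forests (partial hierarchies) reachable by the average link algorithm:
start from singletons, and repeatedly merge two clusters of maximal average
similarity. -/
inductive AvgLinkForest [Fintype α] (w : α → α → ℝ) : Finset (HCTree α) → Prop
  | init : AvgLinkForest w (Finset.univ.image (leaf : α → HCTree α))
  | merge {F : Finset (HCTree α)} {A B : HCTree α} :
      AvgLinkForest w F → A ∈ F → B ∈ F → A ≠ B →
      (∀ X ∈ F, ∀ Y ∈ F, X ≠ Y → sim w X.leaves Y.leaves ≤ sim w A.leaves B.leaves) →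
      AvgLinkForest w (insert (node A B) ((F.erase A).erase B))

/-- `T` is produced by some execution of the average link algorithm. -/
def AvgLinkTree [Fintype α] (w : α → α → ℝ) (T : HCTree α) : Prop :=
  AvgLinkForest w {T}

end HCTree
set_option linter.unusedSectionVars false
namespace HCTree

variable {α : Type} [DecidableEq α]

theorem teq_refl (t : HCTree α) : TEq t t := by
  induction t with
  | leaf a => exact TEq.leaf a
  | node l r ihl ihr => exact TEq.node ihl ihr

theorem teq_trans {a b c : HCTree α} (h1 : TEq a b) (h2 : TEq b c) : TEq a c := by
  induction h1 generalizing c with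
  | leaf a => exact h2
  | node hl hr ihl ihr =>
    cases h2 with
    | node hl' hr' => exact TEq.node (ihl hl') (ihr hr')
    | swap hl' hr' => exact TEq.swap (ihl hl') (ihr hr')
  | swap hl hr ihl ihr =>
    cases h2 with
    | node hl' hr' => exact TEq.swap (ihl hr') (ihr hl')
    | swap hl' hr' => exact TEq.node (ihl hr') (ihr hl')

theorem teq_leaves {a b : HCTree α} (h : TEq a b) : a.leaves = b.leaves := by
  induction h with
  | leaf a => rfl
  | node hl hr ihl ihr => simp [leaves, ihl, ihr]
  | swap hl hr ihl ihr => simp [leaves, ihl, ihr, Finset.union_comm]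

theorem teq_proper {a b : HCTree α} (h : TEq a b) (hp : Proper a) : Proper b := by
  induction h with
  | leaf a => trivial
  | node hl hr ihl ihr =>
    obtain ⟨h1, h2, h3⟩ := hp
    exact ⟨ihl h1, ihr h2, by rwa [← teq_leaves hl, ← teq_leaves hr]⟩
  | swap hl hr ihl ihr =>
    obtain ⟨h1, h2, h3⟩ := hp
    exact ⟨ihr h2, ihl h1, by rw [← teq_leaves hl, ← teq_leaves hr]; exact h3.symm⟩

theorem wSet_nonneg {w : α → α → ℝ} (hw : ∀ i j, 0 ≤ w i j) (A B : Finset α) :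
    0 ≤ wSet w A B :=
  Finset.sum_nonneg fun i _ => Finset.sum_nonneg fun j _ => hw i j

theorem wSet_comm {w : α → α → ℝ} (hsym : ∀ i j, w i j = w j i) (A B : Finset α) :
    wSet w A B = wSet w B A := by
  rw [wSet, wSet, Finset.sum_comm]
  exact Finset.sum_congr rfl fun i _ => Finset.sum_congr rfl fun j _ => hsym _ _

theorem wSet_union_left {w : α → α → ℝ} {A B : Finset α} (C : Finset α)
    (h : Disjoint A B) : wSet w (A ∪ B) C = wSet w A C + wSet w B C := by
  rw [wSet, Finset.sum_union h]; rfl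

theorem leaves_nonempty (t : HCTree α) : t.leaves.Nonempty := by
  induction t with
  | leaf a => exact ⟨a, Finset.mem_singleton_self a⟩
  | node l r ihl ihr => exact ihl.mono (Finset.subset_union_left)

theorem one_le_card_leaves (t : HCTree α) : 1 ≤ ((t.leaves.card : ℝ)) := by
  have := Finset.card_pos.mpr (leaves_nonempty t)
  exact_mod_cast this

theorem leaves_fill_congr (K : Ctx α) {t t' : HCTree α} (h : t.leaves = t'.leaves) :
    (K.fill t).leaves = (K.fill t').leaves := by
  induction K with
  | hole => exact h
  | nodeL K r ih => simp [Ctx.fill, leaves, ih]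
  | nodeR l K ih => simp [Ctx.fill, leaves, ih]

theorem proper_of_fill {K : Ctx α} {t : HCTree α} (h : Proper (K.fill t)) : Proper t := by
  induction K with
  | hole => exact h
  | nodeL K r ih => exact ih h.1
  | nodeR l K ih => exact ih h.2.1

theorem proper_fill_of (K : Ctx α) {t t' : HCTree α} (hl : t.leaves = t'.leaves)
    (hp' : Proper t') (h : Proper (K.fill t)) : Proper (K.fill t') := by
  induction K with
  | hole => exact hp'
  | nodeL K r ih =>
    obtain ⟨h1, h2, h3⟩ := h
    exact ⟨ih h1, h2, by rwa [← leaves_fill_congr K hl]⟩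
  | nodeR l K ih =>
    obtain ⟨h1, h2, h3⟩ := h
    exact ⟨h1, ih h2, by rwa [← leaves_fill_congr K hl]⟩

theorem fill_mRS (w : α → α → ℝ) (n : ℕ) (K : Ctx α) {t t' : HCTree α}
    (h : t.leaves = t'.leaves) :
    mergeRevSum w n (K.fill t) - mergeRevSum w n (K.fill t')
      = mergeRevSum w n t - mergeRevSum w n t' := by
  induction K with
  | hole => rfl
  | nodeL K r ih =>
    simp only [Ctx.fill, mergeRevSum]
    rw [leaves_fill_congr K h]
    linarith [ih]
  | nodeR l K ih =>
    simp only [Ctx.fill, mergeRevSum]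
    rw [leaves_fill_congr K h]
    linarith [ih]

def Ctx.comp : Ctx α → Ctx α → Ctx α
  | Ctx.hole, K' => K'
  | Ctx.nodeL K r, K' => Ctx.nodeL (K.comp K') r
  | Ctx.nodeR l K, K' => Ctx.nodeR l (K.comp K')

theorem fill_comp (K K' : Ctx α) (t : HCTree α) :
    (K.comp K').fill t = K.fill (K'.fill t) := by
  induction K with
  | hole => rfl
  | nodeL K r ih => simp [Ctx.comp, Ctx.fill, ih]
  | nodeR l K ih => simp [Ctx.comp, Ctx.fill, ih]

theorem teq_fill (K : Ctx α) {t t' : HCTree α} (h : TEq t t') :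
    TEq (K.fill t) (K.fill t') := by
  induction K with
  | hole => exact h
  | nodeL K r ih => exact TEq.node ih (teq_refl r)
  | nodeR l K ih => exact TEq.node (teq_refl l) ih

theorem teq_mRS {w : α → α → ℝ} (hsym : ∀ i j, w i j = w j i) (n : ℕ)
    {a b : HCTree α} (h : TEq a b) : mergeRevSum w n a = mergeRevSum w n b := by
  induction h with
  | leaf a => rfl
  | node hl hr ihl ihr =>
    simp only [mergeRevSum, ihl, ihr, teq_leaves hl, teq_leaves hr]
  | swap hl hr ihl ihr =>
    simp only [mergeRevSum, ihl, ihr, teq_leaves hl, teq_leaves hr]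
    rw [wSet_comm hsym]
    ring

end HCTree

namespace HCTree

variable {α : Type} [DecidableEq α] [LinearOrder α]

theorem cross_sum {f : α → α → ℝ} (hf : ∀ i j, f i j = f j i) {A B : Finset α}
    (h : Disjoint A B) :
    ((∑ i ∈ A, ∑ j ∈ B, if i < j then f i j else 0)
      + ∑ i ∈ B, ∑ j ∈ A, if i < j then f i j else 0)
      = ∑ i ∈ A, ∑ j ∈ B, f i j := by
  rw [Finset.sum_comm (s := B) (t := A)]
  rw [← Finset.sum_add_distrib]
  refine Finset.sum_congr rfl fun i hi => ?_
  rw [← Finset.sum_add_distrib]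
  refine Finset.sum_congr rfl fun j hj => ?_
  have hne : i ≠ j := fun he => (Finset.disjoint_left.mp h hi) (he ▸ hj)
  rcases lt_trichotomy i j with hlt | he | hgt
  · rw [if_pos hlt, if_neg (lt_asymm hlt), add_zero]
  · exact absurd he hne
  · rw [if_neg (lt_asymm hgt), if_pos hgt, zero_add, hf j i]

/-- total intra-cluster similarity, recursively. -/
noncomputable def inW (w : α → α → ℝ) : HCTree α → ℝ
  | leaf _ => 0
  | node l r => inW w l + inW w r + wSet w l.leaves r.leaves

theorem inW_nonneg {w : α → α → ℝ} (hw : ∀ i j, 0 ≤ w i j) (t : HCTree α) :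
    0 ≤ inW w t := by
  induction t with
  | leaf a => simp [inW]
  | node l r ihl ihr =>
    simp only [inW]
    have := wSet_nonneg hw l.leaves r.leaves
    linarith

theorem lca_left {l r : HCTree α} {i j : α} (hi : i ∈ l.leaves) (hj : j ∈ l.leaves) :
    (node l r).lcaSize i j = l.lcaSize i j := by
  simp only [lcaSize]; rw [if_pos ⟨hi, hj⟩]

theorem lca_right {l r : HCTree α} {i j : α} (hd : Disjoint l.leaves r.leaves)
    (hi : i ∈ r.leaves) (hj : j ∈ r.leaves) :
    (node l r).lcaSize i j = r.lcaSize i j := by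
  simp only [lcaSize]
  rw [if_neg (fun hc => Finset.disjoint_right.mp hd hi hc.1), if_pos ⟨hi, hj⟩]

theorem lca_cross {l r : HCTree α} {i j : α} (hd : Disjoint l.leaves r.leaves)
    (hi : i ∈ l.leaves) (hj : j ∈ r.leaves) :
    (node l r).lcaSize i j = (l.leaves ∪ r.leaves).card := by
  simp only [lcaSize]
  rw [if_neg (fun hc => Finset.disjoint_right.mp hd hj hc.2),
    if_neg (fun hc => Finset.disjoint_left.mp hd hi hc.1)]

theorem lca_cross' {l r : HCTree α} {i j : α} (hd : Disjoint l.leaves r.leaves)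
    (hi : i ∈ r.leaves) (hj : j ∈ l.leaves) :
    (node l r).lcaSize i j = (l.leaves ∪ r.leaves).card := by
  simp only [lcaSize]
  rw [if_neg (fun hc => Finset.disjoint_right.mp hd hi hc.1),
    if_neg (fun hc => Finset.disjoint_left.mp hd hj hc.2)]

theorem rev_sum_eq {w : α → α → ℝ} (hsym : ∀ i j, w i j = w j i) (n : ℕ)
    (t : HCTree α) (hp : Proper t) :
    (∑ i ∈ t.leaves, ∑ j ∈ t.leaves,
        if i < j then w i j * ((n : ℝ) - (t.lcaSize i j : ℝ)) else 0)
      = mergeRevSum w n t := by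
  induction t with
  | leaf a => simp [leaves, mergeRevSum]
  | node l r ihl ihr =>
    obtain ⟨hpl, hpr, hd⟩ := hp
    set c : ℝ := (n : ℝ) - ((l.leaves ∪ r.leaves).card : ℝ) with hc
    have hAA : (∑ i ∈ l.leaves, ∑ j ∈ l.leaves,
        if i < j then w i j * ((n : ℝ) - ((node l r).lcaSize i j : ℝ)) else 0)
        = mergeRevSum w n l := by
      rw [Finset.sum_congr rfl (fun i hi => Finset.sum_congr rfl fun j hj => by
        rw [lca_left (r := r) hi hj])]
      exact ihl hpl
    have hBB : (∑ i ∈ r.leaves, ∑ j ∈ r.leaves,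
        if i < j then w i j * ((n : ℝ) - ((node l r).lcaSize i j : ℝ)) else 0)
        = mergeRevSum w n r := by
      rw [Finset.sum_congr rfl (fun i hi => Finset.sum_congr rfl fun j hj => by
        rw [lca_right hd hi hj])]
      exact ihr hpr
    have hABr : (∑ i ∈ l.leaves, ∑ j ∈ r.leaves,
        if i < j then w i j * ((n : ℝ) - ((node l r).lcaSize i j : ℝ)) else 0)
        = ∑ i ∈ l.leaves, ∑ j ∈ r.leaves, if i < j then w i j * c else 0 :=
      Finset.sum_congr rfl (fun i hi => Finset.sum_congr rfl fun j hj => by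
        rw [lca_cross hd hi hj])
    have hBAr : (∑ i ∈ r.leaves, ∑ j ∈ l.leaves,
        if i < j then w i j * ((n : ℝ) - ((node l r).lcaSize i j : ℝ)) else 0)
        = ∑ i ∈ r.leaves, ∑ j ∈ l.leaves, if i < j then w i j * c else 0 :=
      Finset.sum_congr rfl (fun i hi => Finset.sum_congr rfl fun j hj => by
        rw [lca_cross' hd hi hj])
    have hcross : ((∑ i ∈ l.leaves, ∑ j ∈ r.leaves, if i < j then w i j * c else 0)
        + ∑ i ∈ r.leaves, ∑ j ∈ l.leaves, if i < j then w i j * c else 0)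
        = wSet w l.leaves r.leaves * c := by
      rw [cross_sum (fun i j => by rw [hsym]) hd]
      rw [wSet, Finset.sum_mul]
      exact Finset.sum_congr rfl fun i _ => (Finset.sum_mul _ _ _).symm
    show (∑ i ∈ l.leaves ∪ r.leaves, ∑ j ∈ l.leaves ∪ r.leaves,
        if i < j then w i j * ((n : ℝ) - ((node l r).lcaSize i j : ℝ)) else 0) = _
    rw [Finset.sum_union hd]
    simp only [Finset.sum_union hd (s₁ := l.leaves) (s₂ := r.leaves)]
    rw [Finset.sum_add_distrib, Finset.sum_add_distrib, hAA, hBB, hABr, hBAr]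
    have hcard : c = (n : ℝ) - (l.leaves.card : ℝ) - (r.leaves.card : ℝ) := by
      rw [hc, Finset.card_union_of_disjoint hd]; push_cast; ring
    simp only [mergeRevSum]
    simp only [hcard] at hcross ⊢
    linear_combination hcross

theorem rev_eq {w : α → α → ℝ} (hsym : ∀ i j, w i j = w j i)
    {t : HCTree α} (hp : Proper t) : rev w t = mergeRevSum w t.leaves.card t :=
  rev_sum_eq hsym t.leaves.card t hp

theorem pairs_eq {w : α → α → ℝ} (hsym : ∀ i j, w i j = w j i)
    (t : HCTree α) (hp : Proper t) : pairsSum w t.leaves = inW w t := by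
  induction t with
  | leaf a => simp [pairsSum, leaves, inW]
  | node l r ihl ihr =>
    obtain ⟨hpl, hpr, hd⟩ := hp
    show (∑ i ∈ l.leaves ∪ r.leaves, ∑ j ∈ l.leaves ∪ r.leaves,
        if i < j then w i j else 0) = _
    rw [Finset.sum_union hd]
    simp only [Finset.sum_union hd (s₁ := l.leaves) (s₂ := r.leaves)]
    rw [Finset.sum_add_distrib, Finset.sum_add_distrib]
    have := cross_sum (f := w) hsym hd
    have h1 : (∑ i ∈ l.leaves, ∑ j ∈ l.leaves, if i < j then w i j else 0)
        = inW w l := ihl hpl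
    have h2 : (∑ i ∈ r.leaves, ∑ j ∈ r.leaves, if i < j then w i j else 0)
        = inW w r := ihr hpr
    simp only [inW]
    rw [wSet]
    linarith

theorem mRS_eq_inW (w : α → α → ℝ) (n : ℕ) (t : HCTree α) :
    mergeRevSum w n t = (n : ℝ) * inW w t - mergeCostSum w t := by
  induction t with
  | leaf a => simp [mergeRevSum, inW, mergeCostSum]
  | node l r ihl ihr =>
    simp only [mergeRevSum, inW, mergeCostSum]
    rw [ihl, ihr]; ring

end HCTree

namespace HCTree

variable {α : Type} [DecidableEq α] [LinearOrder α]

theorem swap_ineqs {w : α → α → ℝ} (hsym : ∀ i j, w i j = w j i)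
    {T : HCTree α} (hproper : T.Proper) (hopt : T.LocalOpt w)
    {K : Ctx α} {X S Dt : HCTree α}
    (h1 : TEq T (K.fill (node (node X S) Dt))) :
    (S.leaves.card : ℝ) * wSet w X.leaves Dt.leaves
        ≤ (Dt.leaves.card : ℝ) * wSet w X.leaves S.leaves
      ∧ (X.leaves.card : ℝ) * wSet w S.leaves Dt.leaves
        ≤ (Dt.leaves.card : ℝ) * wSet w X.leaves S.leaves := by
  set N := T.leaves.card with hN
  set t₀ : HCTree α := node (node X S) Dt with ht₀
  have hPSp : Proper (K.fill t₀) := teq_proper h1 hproper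
  have hpt : Proper t₀ := proper_of_fill hPSp
  obtain ⟨⟨hPX, hPS, hXS⟩, hPD, hXSD⟩ := hpt
  obtain ⟨hXD, hSD⟩ := Finset.disjoint_union_left.mp hXSD
  have hLSp : (K.fill t₀).leaves = T.leaves := (teq_leaves h1).symm
  have cxs : ((X.leaves ∪ S.leaves).card : ℝ) = (X.leaves.card : ℝ) + S.leaves.card := by
    rw [Finset.card_union_of_disjoint hXS]; push_cast; ring
  have hrevT : rev w T = mergeRevSum w N T := rev_eq hsym hproper
  have hmT : mergeRevSum w N T = mergeRevSum w N (K.fill t₀) := teq_mRS hsym N h1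
  have e0 : mergeRevSum w N t₀ = mergeRevSum w N X + mergeRevSum w N S
      + mergeRevSum w N Dt
      + ((N : ℝ) - X.leaves.card - S.leaves.card) * wSet w X.leaves S.leaves
      + ((N : ℝ) - (X.leaves.card + S.leaves.card) - Dt.leaves.card)
        * (wSet w X.leaves Dt.leaves + wSet w S.leaves Dt.leaves) := by
    simp only [ht₀, mergeRevSum, leaves]
    rw [cxs, wSet_union_left _ hXS]; ring
  constructor
  · -- swap S ↔ Dt
    set t₁ : HCTree α := node (node X Dt) S with ht₁
    have hleq : t₀.leaves = t₁.leaves := by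
      simp only [ht₀, ht₁, leaves]
      exact Finset.union_right_comm _ _ _
    have hpt₁ : Proper t₁ :=
      ⟨⟨hPX, hPD, hXD⟩, hPS, Finset.disjoint_union_left.mpr ⟨hXS, hSD.symm⟩⟩
    have hrev' : rev w (K.fill t₁) ≤ rev w T :=
      hopt (K.fill t₀) (K.fill t₁) h1 ⟨K, X, S, Dt, rfl, Or.inl rfl⟩
    have hP1 : Proper (K.fill t₁) := proper_fill_of K hleq hpt₁ hPSp
    have hL1 : (K.fill t₁).leaves = T.leaves :=
      (leaves_fill_congr K hleq.symm).trans hLSp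
    have hrev1 : rev w (K.fill t₁) = mergeRevSum w N (K.fill t₁) := by
      have := rev_eq hsym hP1
      rwa [hL1] at this
    have hdiff := fill_mRS w N K hleq
    have cxd : ((X.leaves ∪ Dt.leaves).card : ℝ)
        = (X.leaves.card : ℝ) + Dt.leaves.card := by
      rw [Finset.card_union_of_disjoint hXD]; push_cast; ring
    have e1 : mergeRevSum w N t₁ = mergeRevSum w N X + mergeRevSum w N Dt
        + mergeRevSum w N S
        + ((N : ℝ) - X.leaves.card - Dt.leaves.card) * wSet w X.leaves Dt.leaves
        + ((N : ℝ) - (X.leaves.card + Dt.leaves.card) - S.leaves.card)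
          * (wSet w X.leaves S.leaves + wSet w Dt.leaves S.leaves) := by
      simp only [ht₁, mergeRevSum, leaves]
      rw [cxd, wSet_union_left _ hXD]; ring
    rw [hrev1] at hrev'
    rw [hrevT, hmT] at hrev'
    rw [wSet_comm hsym Dt.leaves S.leaves] at e1
    nlinarith [hdiff, e0, e1, hrev']
  · -- swap X ↔ Dt
    set t₂ : HCTree α := node (node Dt S) X with ht₂
    have hleq : t₀.leaves = t₂.leaves := by
      simp only [ht₀, ht₂, leaves]
      ext a
      simp only [Finset.mem_union]
      tauto
    have hpt₂ : Proper t₂ :=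
      ⟨⟨hPD, hPS, hSD.symm⟩, hPX, Finset.disjoint_union_left.mpr ⟨hXD.symm, hXS.symm⟩⟩
    have hrev' : rev w (K.fill t₂) ≤ rev w T :=
      hopt (K.fill t₀) (K.fill t₂) h1 ⟨K, X, S, Dt, rfl, Or.inr rfl⟩
    have hP2 : Proper (K.fill t₂) := proper_fill_of K hleq hpt₂ hPSp
    have hL2 : (K.fill t₂).leaves = T.leaves :=
      (leaves_fill_congr K hleq.symm).trans hLSp
    have hrev2 : rev w (K.fill t₂) = mergeRevSum w N (K.fill t₂) := by
      have := rev_eq hsym hP2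
      rwa [hL2] at this
    have hdiff := fill_mRS w N K hleq
    have cds : ((Dt.leaves ∪ S.leaves).card : ℝ)
        = (Dt.leaves.card : ℝ) + S.leaves.card := by
      rw [Finset.card_union_of_disjoint hSD.symm]; push_cast; ring
    have e2 : mergeRevSum w N t₂ = mergeRevSum w N Dt + mergeRevSum w N S
        + mergeRevSum w N X
        + ((N : ℝ) - Dt.leaves.card - S.leaves.card) * wSet w S.leaves Dt.leaves
        + ((N : ℝ) - (Dt.leaves.card + S.leaves.card) - X.leaves.card)
          * (wSet w X.leaves Dt.leaves + wSet w X.leaves S.leaves) := by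
      simp only [ht₂, mergeRevSum, leaves]
      rw [cds, wSet_union_left _ hSD.symm, wSet_comm hsym Dt.leaves S.leaves,
        wSet_comm hsym Dt.leaves X.leaves, wSet_comm hsym S.leaves X.leaves]
      ring
    rw [hrev2] at hrev'
    rw [hrevT, hmT] at hrev'
    nlinarith [hdiff, e0, e2, hrev']

theorem key_lemma {w : α → α → ℝ} (hsym : ∀ i j, w i j = w j i)
    (hnonneg : ∀ i j, 0 ≤ w i j)
    {T : HCTree α} (hproper : T.Proper) (hopt : T.LocalOpt w)
    (a : HCTree α) : ∀ (K : Ctx α) (Dt : HCTree α),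
    TEq T (K.fill (node a Dt)) →
    ((a.leaves.card : ℝ) - 1) * wSet w a.leaves Dt.leaves
      ≤ 2 * (Dt.leaves.card : ℝ) * inW w a := by
  induction a with
  | leaf b =>
    intro K Dt h1
    simp [leaves, inW]
  | node X S ihX ihS =>
    intro K Dt h1
    obtain ⟨ineq1, ineq2⟩ := swap_ineqs hsym hproper hopt h1
    have hpt : Proper (node (node X S) Dt) := proper_of_fill (teq_proper h1 hproper)
    obtain ⟨⟨hPX, hPS, hXS⟩, hPD, hXSD⟩ := hpt
    obtain ⟨hXD, hSD⟩ := Finset.disjoint_union_left.mp hXSD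
    have hX := ihX (K.comp (Ctx.nodeL Ctx.hole Dt)) S (by rw [fill_comp]; exact h1)
    have hS := ihS (K.comp (Ctx.nodeL Ctx.hole Dt)) X (by
      rw [fill_comp]
      exact teq_trans h1 (teq_fill K
        (TEq.node (TEq.swap (teq_refl X) (teq_refl S)) (teq_refl Dt))))
    rw [wSet_comm hsym] at hS
    set x : ℝ := (X.leaves.card : ℝ) with hxd
    set s : ℝ := (S.leaves.card : ℝ) with hsd
    set d : ℝ := (Dt.leaves.card : ℝ) with hdd
    have hx : (1 : ℝ) ≤ x := one_le_card_leaves X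
    have hs : (1 : ℝ) ≤ s := one_le_card_leaves S
    have hd0 : (0 : ℝ) ≤ d := by rw [hdd]; positivity
    have cxs : (((node X S).leaves.card : ℝ)) = x + s := by
      simp only [leaves]
      rw [Finset.card_union_of_disjoint hXS]; push_cast; ring
    rw [cxs]
    show ((x + s) - 1) * wSet w (X.leaves ∪ S.leaves) Dt.leaves ≤ _
    rw [wSet_union_left _ hXS]
    simp only [inW]
    set wXS := wSet w X.leaves S.leaves
    set wXD := wSet w X.leaves Dt.leaves
    set wSD := wSet w S.leaves Dt.leaves
    set iX := inW w X
    set iS := inW w S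
    have e1 : (x * (x + s - 1)) * (s * wXD) ≤ (x * (x + s - 1)) * (d * wXS) :=
      mul_le_mul_of_nonneg_left ineq1 (by nlinarith)
    have e2 : (s * (x + s - 1)) * (x * wSD) ≤ (s * (x + s - 1)) * (d * wXS) :=
      mul_le_mul_of_nonneg_left ineq2 (by nlinarith)
    have e3 : (d * x) * ((x - 1) * wXS) ≤ (d * x) * (2 * s * iX) :=
      mul_le_mul_of_nonneg_left hX (by nlinarith)
    have e4 : (d * s) * ((s - 1) * wXS) ≤ (d * s) * (2 * x * iS) :=
      mul_le_mul_of_nonneg_left hS (by nlinarith)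
    have hxs : (0 : ℝ) < x * s := by nlinarith
    refine le_of_mul_le_mul_left ?_ hxs
    linarith [e1, e2, e3, e4]

theorem glob_lemma {w : α → α → ℝ} (hsym : ∀ i j, w i j = w j i)
    (hnonneg : ∀ i j, 0 ≤ w i j)
    {T : HCTree α} (hproper : T.Proper) (hopt : T.LocalOpt w)
    (t : HCTree α) : ∀ (K : Ctx α), TEq T (K.fill t) →
    3 * mergeCostSum w t ≤ (2 * (t.leaves.card : ℝ) + 2) * inW w t := by
  induction t with
  | leaf b => intro K h1; simp [mergeCostSum, inW]
  | node l r ihl ihr =>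
    intro K h1
    have hpt : Proper (node l r) := proper_of_fill (teq_proper h1 hproper)
    obtain ⟨hPl, hPr, hd⟩ := hpt
    have hl := ihl (K.comp (Ctx.nodeL Ctx.hole r)) (by rw [fill_comp]; exact h1)
    have hr := ihr (K.comp (Ctx.nodeR l Ctx.hole)) (by rw [fill_comp]; exact h1)
    have hkl := key_lemma hsym hnonneg hproper hopt l K r h1
    have hkr := key_lemma hsym hnonneg hproper hopt r K l
      (teq_trans h1 (teq_fill K (TEq.swap (teq_refl l) (teq_refl r))))
    rw [wSet_comm hsym] at hkr
    have cxs : (((node l r).leaves.card : ℝ)) = (l.leaves.card : ℝ) + r.leaves.card := by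
      simp only [leaves]
      rw [Finset.card_union_of_disjoint hd]; push_cast; ring
    rw [cxs]
    simp only [mergeCostSum, inW]
    have h1w := wSet_nonneg hnonneg l.leaves r.leaves
    have h2w := inW_nonneg hnonneg l
    have h3w := inW_nonneg hnonneg r
    have hx : (1 : ℝ) ≤ (l.leaves.card : ℝ) := one_le_card_leaves l
    have hs : (1 : ℝ) ≤ (r.leaves.card : ℝ) := one_le_card_leaves r
    nlinarith [hl, hr, hkl, hkr]

end HCTree

open HCTree in
/-- any locally optimal HC tree of order `n` has revenue at least
`((n-2)/3) · Σ_{i<j} w(i,j)`. -/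
theorem locally_optimal_revenue_lower_bound {n : ℕ} (w : Fin n → Fin n → ℝ)
    (hsym : ∀ i j, w i j = w j i) (hnonneg : ∀ i j, 0 ≤ w i j)
    (T : HCTree (Fin n)) (hproper : T.Proper) (horder : T.leaves = Finset.univ)
    (hopt : T.LocalOpt w) :
    T.rev w ≥ ((n : ℝ) - 2) / 3 * ∑ i : Fin n, ∑ j : Fin n, if i < j then w i j else 0 := by
  have hcard : T.leaves.card = n := by
    rw [horder, Finset.card_univ, Fintype.card_fin]
  have hrev : T.rev w = (n : ℝ) * inW w T - mergeCostSum w T := by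
    rw [rev_eq hsym hproper, hcard, mRS_eq_inW]
  have hglob : 3 * mergeCostSum w T ≤ (2 * (n : ℝ) + 2) * inW w T := by
    have := glob_lemma hsym hnonneg hproper hopt T Ctx.hole (teq_refl T)
    rwa [hcard] at this
  have hW : (∑ i : Fin n, ∑ j : Fin n, if i < j then w i j else 0) = inW w T := by
    rw [← pairs_eq hsym T hproper, horder]
    rfl
  rw [hW, ge_iff_le, div_mul_eq_mul_div, div_le_iff₀ (by norm_num : (0:ℝ) < 3)]
  linarith [hrev, hglob]
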